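/- Telescoped global error recursion (Theorem 3.2). Under the setup below, define for k ≥ 2 the remainders ℛ_k := 2 G⁻¹ sin((h/2)G) Σ_{l=0}^{k−2} ∫₀ʰ cos(((k−l)h − h/2 − τ)G) (m(t_l+τ)((τ²/2) \bar{E}_l + E_l(τ))) dτ + ∫₀ʰ G⁻¹ sin((h−τ)G) (m(t_{k−1}+τ)((τ²/2) \bar{E}_{k−1} + E_{k−1}(τ))) dτ and ℛ'_k := −2 sin((h/2)G) Σ_{l=0}^{k−2} ∫₀ʰ sin(((k−l)h − h/2 − τ)G) (m(t_l+τ)((τ²/2) \bar{E}_l + E_l(τ))) dτ + ∫₀ʰ cos((h−τ)G) (m(t_{k−1}+τ)((τ²/2) \bar{E}_{k−1} + E_{k−1}(τ))) dτ, and set ℛ₁ := ∫₀ʰ G⁻¹ sin((h−τ)G)(m(t₀+τ)(E₀(τ))) dτ, ℛ'₁ := ∫₀ʰ cos((h−τ)G)(m(t₀+τ)(E₀(τ))) dτ. Then ε₁ = ℛ₁, ε'₁ = ℛ'₁, and for every 2 ≤ k ≤ K: ε_k = ε_{k−1} + 2 G⁻¹ sin((h/2)G) Σ_{l=1}^{k−2}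 ∫₀ʰ cos(((k−l)h − h/2 − τ)G)(m(t_l+τ)(ε_l + τ(1+τ/(2h)) ε'_l − (τ²/(2h)) ε'_{l−1})) dτ + ∫₀ʰ G⁻¹ sin((h−τ)G)(m(t_{k−1}+τ)(ε_{k−1} + τ(1+τ/(2h)) ε'_{k−1} − (τ²/(2h)) ε'_{k−2})) dτ + ℛ_k, and ε'_k = ε'_{k−1} − 2 sin((h/2)G) Σ_{l=1}^{k−2} ∫₀ʰ sin(((k−l)h − h/2 − τ)G)(m(t_l+τ)(ε_l + τ(1+τ/(2h)) ε'_l − (τ²/(2h)) ε'_{l−1})) dτ + ∫₀ʰ cos((h−τ)G)(m(t_{k−1}+τ)(ε_{k−1} + τ(1+τ/(2h)) ε'_{k−1} − (τ²/(2h)) ε'_{k−2})) dτ + ℛ'_k. -/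

import Mathlib

/-- `cos(tG) := (exp(itG) + exp(−itG))/2` in a complex unital Banach algebra. -/
noncomputable def opCos {A : Type*} [NormedRing A] [NormedAlgebra ℂ A] (t : ℝ) (G : A) : A :=
  (2 : ℂ)⁻¹ • (NormedSpace.exp (((t : ℂ) * Complex.I) • G) +
    NormedSpace.exp ((-(t : ℂ) * Complex.I) • G))

/-- `sin(tG) := (exp(itG) − exp(−itG))/(2i)` in a complex unital Banach algebra. -/
noncomputable def opSin {A : Type*} [NormedRing A] [NormedAlgebra ℂ A] (t : ℝ) (G : A) : A :=
  (2 * Complex.I)⁻¹ • (NormedSpace.exp (((t : ℂ) * Complex.I) • G) -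
    NormedSpace.exp ((-(t : ℂ) * Complex.I) • G))

/-!
The errors `(ε_k, ε'_k)` obey the same variation-of-constants step as the exact solution, with
`m(t_k + τ)` applied to the defect of the scheme's quadratic extrapolation, which splits into a
part linear in the errors and the Taylor defect `(τ²/2) Ē_k + E_k(τ)`. Unrolling the step from zero
data with the addition theorems for `cos(tG)`, `sin(tG)` gives the discrete Duhamel formula
`ε_k = G⁻¹ ∑_{l<k} ∫₀ʰ sin(((k-l)h - τ)G) g_l(τ) dτ` in terms of the forcings `g_l`, and the
difference of two consecutive such sums telescopes by
`sin(a + h/2) - sin(a - h/2) = 2 sin(h/2) cos a` and its cosine analogue.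
-/

open NormedSpace Complex Finset

section OperatorTrigonometry

variable {A : Type*} [NormedRing A] [NormedAlgebra ℂ A]

noncomputable def opExp (t : ℝ) (G : A) : A := exp (((t : ℂ) * I) • G)

variable (G : A)

theorem opExp_add [CompleteSpace A] (s t : ℝ) : opExp (s + t) G = opExp s G * opExp t G := by
  have hball : ∀ x : A, x ∈ Metric.eball (0 : A) (expSeries ℂ A).radius := fun x => by
    simp [expSeries_radius_eq_top]
  rw [opExp, opExp, opExp, ← exp_add_of_commute_of_mem_ball
    (((Commute.refl G).smul_left _).smul_right _) (hball _) (hball _), ← add_smul]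
  push_cast
  ring_nf

theorem opCos_eq (t : ℝ) : opCos t G = (2 : ℂ)⁻¹ • (opExp t G + opExp (-t) G) := by
  simp [opCos, opExp]

theorem opSin_eq (t : ℝ) : opSin t G = (2 * I)⁻¹ • (opExp t G - opExp (-t) G) := by
  simp [opSin, opExp]

theorem opCos_neg (t : ℝ) : opCos (-t) G = opCos t G := by
  rw [opCos_eq, opCos_eq, neg_neg, add_comm]

theorem opSin_neg (t : ℝ) : opSin (-t) G = -opSin t G := by
  rw [opSin_eq, opSin_eq, neg_neg, ← smul_neg, neg_sub]

theorem opSin_add [CompleteSpace A] (s t : ℝ) :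
    opSin (s + t) G = opSin s G * opCos t G + opCos s G * opSin t G := by
  simp only [opSin_eq, opCos_eq, smul_mul_smul_comm, mul_add, add_mul, mul_sub, sub_mul,
    ← opExp_add, neg_add]
  module

theorem opCos_add [CompleteSpace A] (s t : ℝ) :
    opCos (s + t) G = opCos s G * opCos t G - opSin s G * opSin t G := by
  simp only [opSin_eq, opCos_eq, smul_mul_smul_comm, mul_add, add_mul, mul_sub, sub_mul,
    ← opExp_add, neg_add]
  rw [show (2 * I)⁻¹ * (2 * I)⁻¹ = -((2 : ℂ)⁻¹ * 2⁻¹) by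
    rw [← mul_inv, mul_mul_mul_comm, I_mul_I]; norm_num]
  module

theorem opSin_add_sub_opSin_sub [CompleteSpace A] (s t : ℝ) :
    opSin (s + t) G - opSin (s - t) G = 2 * opSin t G * opCos s G := by
  rw [add_comm s, show s - t = -t + s by ring, opSin_add, opSin_add, opSin_neg, opCos_neg]
  noncomm_ring

theorem opCos_add_sub_opCos_sub [CompleteSpace A] (s t : ℝ) :
    opCos (s + t) G - opCos (s - t) G = -(2 * opSin t G * opSin s G) := by
  rw [add_comm s, show s - t = -t + s by ring, opCos_add, opCos_add, opSin_neg, opCos_neg]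
  noncomm_ring

variable {G} in
theorem Commute.opCos_right {B : A} (hB : Commute B G) (t : ℝ) : Commute B (opCos t G) := by
  rw [opCos_eq]
  exact (((hB.smul_right _).exp_right).add_right ((hB.smul_right _).exp_right)).smul_right _

variable {G} in
theorem Commute.opSin_right {B : A} (hB : Commute B G) (t : ℝ) : Commute B (opSin t G) := by
  rw [opSin_eq]
  exact (((hB.smul_right _).exp_right).sub_right ((hB.smul_right _).exp_right)).smul_right _

@[fun_prop]
theorem continuous_opExp [CompleteSpace A] : Continuous fun t : ℝ => opExp t G := by
  have hexp : Continuous (exp : A → A) :=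
    continuous_iff_continuousAt.2 fun x => (exp_analytic (𝕂 := ℂ) x).continuousAt
  unfold opExp
  fun_prop

@[fun_prop]
theorem continuous_opCos [CompleteSpace A] : Continuous fun t : ℝ => opCos t G := by
  simp only [opCos_eq]
  fun_prop

@[fun_prop]
theorem continuous_opSin [CompleteSpace A] : Continuous fun t : ℝ => opSin t G := by
  simp only [opSin_eq]
  fun_prop

end OperatorTrigonometry

section DuhamelIntegrals

variable {E : Type*} [NormedAddCommGroup E] [NormedSpace ℂ E] [CompleteSpace E]
  (G : E →L[ℂ] E) {g : ℝ → E} {a b : ℝ}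

theorem integral_clm_apply_add_integral_clm_apply {T₁ T₂ : ℝ → E →L[ℂ] E} (B₁ B₂ : E →L[ℂ] E)
    (hT₁ : Continuous T₁) (hT₂ : Continuous T₂) (hg : Continuous g) :
    B₁ (∫ τ in a..b, T₁ τ (g τ)) + B₂ (∫ τ in a..b, T₂ τ (g τ)) =
      ∫ τ in a..b, (B₁ * T₁ τ + B₂ * T₂ τ) (g τ) := by
  rw [← B₁.intervalIntegral_comp_comm ((hT₁.clm_apply hg).intervalIntegrable _ _),
    ← B₂.intervalIntegral_comp_comm ((hT₂.clm_apply hg).intervalIntegrable _ _),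
    ← intervalIntegral.integral_add ((by fun_prop : Continuous _).intervalIntegrable _ _)
      ((by fun_prop : Continuous _).intervalIntegrable _ _)]
  rfl

theorem integral_opSin_add (hg : Continuous g) (s : ℝ) {c c' : ℝ} (hc : s + c = c') :
    opCos s G (∫ τ in a..b, opSin (c - τ) G (g τ)) +
        opSin s G (∫ τ in a..b, opCos (c - τ) G (g τ)) =
      ∫ τ in a..b, opSin (c' - τ) G (g τ) := by
  rw [integral_clm_apply_add_integral_clm_apply _ _ (by fun_prop) (by fun_prop) hg, ← hc]
  simp_rw [add_sub_assoc, opSin_add, add_comm (opSin s G * _)]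

theorem integral_opCos_add (hg : Continuous g) (s : ℝ) {c c' : ℝ} (hc : s + c = c') :
    opCos s G (∫ τ in a..b, opCos (c - τ) G (g τ)) -
        opSin s G (∫ τ in a..b, opSin (c - τ) G (g τ)) =
      ∫ τ in a..b, opCos (c' - τ) G (g τ) := by
  rw [sub_eq_add_neg, ← neg_apply,
    integral_clm_apply_add_integral_clm_apply _ _ (by fun_prop) (by fun_prop) hg, ← hc]
  simp_rw [add_sub_assoc, opCos_add, neg_mul, ← sub_eq_add_neg]

theorem integral_opSin_sub_integral_opSin (hg : Continuous g) {s c c₁ c₂ : ℝ}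
    (h₁ : c + s = c₁) (h₂ : c - s = c₂) :
    ((∫ τ in a..b, opSin (c₁ - τ) G (g τ)) - ∫ τ in a..b, opSin (c₂ - τ) G (g τ)) =
      (2 : ℝ) • opSin s G (∫ τ in a..b, opCos (c - τ) G (g τ)) := by
  rw [← intervalIntegral.integral_sub ((by fun_prop : Continuous _).intervalIntegrable _ _)
      ((by fun_prop : Continuous _).intervalIntegrable _ _),
    ← (opSin s G).intervalIntegral_comp_comm ((by fun_prop : Continuous _).intervalIntegrable _ _),
    ← intervalIntegral.integral_smul]
  refine intervalIntegral.integral_congr fun τ _ => ?_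
  have key := opSin_add_sub_opSin_sub G (c - τ) s
  rw [sub_add_eq_add_sub, h₁, sub_right_comm, h₂] at key
  simp [← sub_apply, key, two_smul]

theorem integral_opCos_sub_integral_opCos (hg : Continuous g) {s c c₁ c₂ : ℝ}
    (h₁ : c + s = c₁) (h₂ : c - s = c₂) :
    ((∫ τ in a..b, opCos (c₁ - τ) G (g τ)) - ∫ τ in a..b, opCos (c₂ - τ) G (g τ)) =
      -((2 : ℝ) • opSin s G (∫ τ in a..b, opSin (c - τ) G (g τ))) := by
  rw [← intervalIntegral.integral_sub ((by fun_prop : Continuous _).intervalIntegrable _ _)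
      ((by fun_prop : Continuous _).intervalIntegrable _ _),
    ← (opSin s G).intervalIntegral_comp_comm ((by fun_prop : Continuous _).intervalIntegrable _ _),
    ← intervalIntegral.integral_smul, ← intervalIntegral.integral_neg]
  refine intervalIntegral.integral_congr fun τ _ => ?_
  have key := opCos_add_sub_opCos_sub G (c - τ) s
  rw [sub_add_eq_add_sub, h₁, sub_right_comm, h₂] at key
  simp [← sub_apply, key, two_smul]

end DuhamelIntegrals

section DiscreteDuhamel

variable {E : Type*} [NormedAddCommGroup E] [NormedSpace ℂ E] [CompleteSpace E]
  (G Ginv : E →L[ℂ] E) (h : ℝ)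

/-- The variation-of-constants step of `ψ'' + G²ψ = g` over `[0, h]` from the data `(u, v)`. -/
noncomputable def duhamelStep (u v : E) (g : ℝ → E) : E × E :=
  (opCos h G u + Ginv (opSin h G v) + ∫ τ in (0:ℝ)..h, Ginv (opSin (h - τ) G (g τ)),
    -(G (opSin h G u)) + opCos h G v + ∫ τ in (0:ℝ)..h, opCos (h - τ) G (g τ))

variable {G Ginv h} {m : ℝ → E →L[ℂ] E}

theorem prodMk_sub_eq_duhamelStep (hm : Continuous m) {t : ℝ} {f F W : ℝ → E}
    (hf : Continuous f) (hF : Continuous F) {a b A B u v U V : E}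
    (hab : (a, b) = duhamelStep G Ginv h u v fun τ => m (t + τ) (f τ))
    (hAB : (A, B) = duhamelStep G Ginv h U V fun τ => m (t + τ) (F τ))
    (hW : ∀ τ, f τ - F τ = W τ) :
    (a - A, b - B) = duhamelStep G Ginv h (u - U) (v - V) fun τ => m (t + τ) (W τ) := by
  simp only [duhamelStep, Prod.mk.injEq] at hab hAB ⊢
  simp only [hab, hAB, ← hW, map_sub]
  rw [intervalIntegral.integral_sub ((by fun_prop : Continuous _).intervalIntegrable _ _)
      ((by fun_prop : Continuous _).intervalIntegrable _ _),
    intervalIntegral.integral_sub ((by fun_prop : Continuous _).intervalIntegrable _ _)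
      ((by fun_prop : Continuous _).intervalIntegrable _ _)]
  constructor <;> abel

variable {g : ℕ → ℝ → E} {x y : ℕ → E} {N : ℕ}

theorem duhamel_sum (hGl : Ginv * G = 1) (hGr : G * Ginv = 1) (hg : ∀ l, Continuous (g l))
    (hx0 : x 0 = 0) (hy0 : y 0 = 0)
    (hstep : ∀ k < N, (x (k + 1), y (k + 1)) = duhamelStep G Ginv h (x k) (y k) (g k))
    {k : ℕ} (hk : k ≤ N) :
    x k = Ginv (∑ l ∈ range k, ∫ τ in (0:ℝ)..h, opSin (((k : ℝ) - l) * h - τ) G (g l τ)) ∧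
    y k = ∑ l ∈ range k, ∫ τ in (0:ℝ)..h, opCos (((k : ℝ) - l) * h - τ) G (g l τ) := by
  induction k with
  | zero => simp [hx0, hy0]
  | succ k ih =>
    obtain ⟨hx, hy⟩ := ih (by omega)
    obtain ⟨hxs, hys⟩ := Prod.mk.inj (hstep k hk)
    have hcos : ∀ v, opCos h G (Ginv v) = Ginv (opCos h G v) := fun v =>
      (DFunLike.congr_fun (Commute.opCos_right (hGl.trans hGr.symm) h).eq v).symm
    have hsin : ∀ v, G (opSin h G (Ginv v)) = opSin h G v := fun v =>
      DFunLike.congr_fun (show G * opSin h G * Ginv = opSin h G by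
        rw [((Commute.refl G).opSin_right h).eq, mul_assoc, hGr, mul_one]) v
    have hlast : ((k + 1 : ℕ) - k : ℝ) * h = h := by push_cast; ring
    constructor
    · rw [hxs, hx, hy, hcos, ← map_add, map_sum, map_sum, ← sum_add_distrib,
        Ginv.intervalIntegral_comp_comm ((by fun_prop : Continuous _).intervalIntegrable _ _),
        ← map_add, sum_range_succ, hlast]
      congr 2
      exact sum_congr rfl fun l _ => integral_opSin_add G (hg l) h (by push_cast; ring)
    · rw [hys, hx, hy, hsin, neg_add_eq_sub, map_sum, map_sum, ← sum_sub_distrib,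
        sum_range_succ, hlast]
      congr 1
      exact sum_congr rfl fun l _ => integral_opCos_add G (hg l) h (by push_cast; ring)

theorem duhamel_telescope (hGl : Ginv * G = 1) (hGr : G * Ginv = 1) (hg : ∀ l, Continuous (g l))
    (hx0 : x 0 = 0) (hy0 : y 0 = 0)
    (hstep : ∀ k < N, (x (k + 1), y (k + 1)) = duhamelStep G Ginv h (x k) (y k) (g k))
    {k : ℕ} (hk : 1 ≤ k) (hkN : k ≤ N) :
    x k = x (k - 1) +
      (2 : ℝ) • Ginv (opSin (h / 2) G (∑ l ∈ range (k - 1),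
        ∫ τ in (0:ℝ)..h, opCos (((k : ℝ) - l) * h - h / 2 - τ) G (g l τ))) +
      ∫ τ in (0:ℝ)..h, Ginv (opSin (h - τ) G (g (k - 1) τ)) ∧
    y k = y (k - 1) -
      (2 : ℝ) • opSin (h / 2) G (∑ l ∈ range (k - 1),
        ∫ τ in (0:ℝ)..h, opSin (((k : ℝ) - l) * h - h / 2 - τ) G (g l τ)) +
      ∫ τ in (0:ℝ)..h, opCos (h - τ) G (g (k - 1) τ) := by
  obtain ⟨j, rfl⟩ : ∃ j, k = j + 1 := ⟨k - 1, by omega⟩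
  obtain ⟨hx₁, hy₁⟩ := duhamel_sum hGl hGr hg hx0 hy0 hstep hkN
  obtain ⟨hx₀, hy₀⟩ := duhamel_sum hGl hGr hg hx0 hy0 hstep (k := j) (by omega)
  have hlast : ((j + 1 : ℕ) - j : ℝ) * h = h := by push_cast; ring
  rw [Nat.add_sub_cancel]
  constructor
  · rw [hx₁, hx₀, sum_range_succ, hlast, map_add,
      Ginv.intervalIntegral_comp_comm ((by fun_prop : Continuous _).intervalIntegrable _ _),
      add_left_inj, ← sub_eq_iff_eq_add', ← map_sub, ← sum_sub_distrib,
      ← ContinuousLinearMap.map_smul_of_tower, map_sum (opSin (h / 2) G), smul_sum]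
    exact congrArg _ (sum_congr rfl fun l _ =>
      integral_opSin_sub_integral_opSin G (hg l) (by push_cast; ring) (by push_cast; ring))
  · rw [hy₁, hy₀, sum_range_succ, hlast, add_left_inj, sub_eq_add_neg, ← sub_eq_iff_eq_add',
      ← sum_sub_distrib, map_sum (opSin (h / 2) G), smul_sum, ← sum_neg_distrib]
    exact sum_congr rfl fun l _ =>
      integral_opCos_sub_integral_opCos G (hg l) (by push_cast; ring) (by push_cast; ring)

theorem duhamel_telescope_split (hGl : Ginv * G = 1) (hGr : G * Ginv = 1) (hm : Continuous m)
    {t₀ : ℝ} {p d : ℕ → ℝ → E} (hp : ∀ l, Continuous (p l)) (hd : ∀ l, Continuous (d l))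
    (hp0 : p 0 = 0) (hx0 : x 0 = 0) (hy0 : y 0 = 0)
    (hstep : ∀ k < N, (x (k + 1), y (k + 1)) =
      duhamelStep G Ginv h (x k) (y k) fun τ => m (t₀ + k * h + τ) (p k τ + d k τ))
    {k : ℕ} (hk : 2 ≤ k) (hkN : k ≤ N) :
    x k = x (k - 1) +
      (2 : ℝ) • Ginv (opSin (h / 2) G (∑ l ∈ Icc 1 (k - 2), ∫ τ in (0:ℝ)..h,
        opCos (((k : ℝ) - l) * h - h / 2 - τ) G (m (t₀ + l * h + τ) (p l τ)))) +
      (∫ τ in (0:ℝ)..h, Ginv (opSin (h - τ) G (m (t₀ + (k - 1 : ℕ) * h + τ) (p (k - 1) τ)))) +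
      ((2 : ℝ) • Ginv (opSin (h / 2) G (∑ l ∈ range (k - 1), ∫ τ in (0:ℝ)..h,
        opCos (((k : ℝ) - l) * h - h / 2 - τ) G (m (t₀ + l * h + τ) (d l τ)))) +
      ∫ τ in (0:ℝ)..h, Ginv (opSin (h - τ) G (m (t₀ + (k - 1 : ℕ) * h + τ) (d (k - 1) τ)))) ∧
    y k = y (k - 1) -
      (2 : ℝ) • opSin (h / 2) G (∑ l ∈ Icc 1 (k - 2), ∫ τ in (0:ℝ)..h,
        opSin (((k : ℝ) - l) * h - h / 2 - τ) G (m (t₀ + l * h + τ) (p l τ))) +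
      (∫ τ in (0:ℝ)..h, opCos (h - τ) G (m (t₀ + (k - 1 : ℕ) * h + τ) (p (k - 1) τ))) +
      (-((2 : ℝ) • opSin (h / 2) G (∑ l ∈ range (k - 1), ∫ τ in (0:ℝ)..h,
        opSin (((k : ℝ) - l) * h - h / 2 - τ) G (m (t₀ + l * h + τ) (d l τ)))) +
      ∫ τ in (0:ℝ)..h, opCos (h - τ) G (m (t₀ + (k - 1 : ℕ) * h + τ) (d (k - 1) τ))) := by
  obtain ⟨hx, hy⟩ := duhamel_telescope hGl hGr (fun l => by fun_prop) hx0 hy0 hstep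
    (by omega : 1 ≤ k) hkN
  obtain ⟨j, rfl⟩ : ∃ j, k = j + 2 := ⟨k - 2, by omega⟩
  simp only [map_add] at hx hy
  simp (disch := apply Continuous.intervalIntegrable; fun_prop) only
    [intervalIntegral.integral_add, sum_add_distrib] at hx hy
  rw [sum_range_eq_add_Ico _ (by omega)] at hx hy
  simp only [hp0, Pi.zero_apply, map_zero, intervalIntegral.integral_zero, zero_add, map_add,
    smul_add, show j + 2 - 1 = j + 1 from rfl, show j + 2 - 2 = j from rfl,
    Ico_add_one_right_eq_Icc] at hx hy ⊢
  rw [hx, hy]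
  constructor <;> abel

end DiscreteDuhamel

theorem telescoped_global_error_recursion_general
    {E : Type*} [NormedAddCommGroup E] [NormedSpace ℂ E] [CompleteSpace E]
    (G Ginv : E →L[ℂ] E) (hGr : G * Ginv = 1) (hGl : Ginv * G = 1)
    (t₀ h : ℝ) (K : ℕ)
    (m : ℝ → (E →L[ℂ] E)) (hm : Continuous m)
    (ψ φ σ : ℝ → E)
    (hdψ : ∀ t : ℝ, HasDerivAt ψ (φ t) t)
    -- one-step Duhamel relations for the exact solution
    (hstepψ : ∀ k : ℕ, k ≤ K - 1 →
      ψ (t₀ + ((k : ℝ) + 1) * h) =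
        opCos h G (ψ (t₀ + k * h)) + Ginv (opSin h G (φ (t₀ + k * h))) +
          ∫ τ in (0:ℝ)..h,
            Ginv (opSin (h - τ) G (m (t₀ + k * h + τ) (ψ (t₀ + k * h + τ)))))
    (hstepφ : ∀ k : ℕ, k ≤ K - 1 →
      φ (t₀ + ((k : ℝ) + 1) * h) =
        -(G (opSin h G (ψ (t₀ + k * h)))) + opCos h G (φ (t₀ + k * h)) +
          ∫ τ in (0:ℝ)..h,
            opCos (h - τ) G (m (t₀ + k * h + τ) (ψ (t₀ + k * h + τ))))
    -- the numerical scheme Ξ³ started from the exact data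
    (Ψ Ψ' : ℕ → E) (hΨ0 : Ψ 0 = ψ t₀) (hΨ'0 : Ψ' 0 = φ t₀)
    (hΨ1 : Ψ 1 = opCos h G (ψ t₀) + Ginv (opSin h G (φ t₀)) +
      ∫ τ in (0:ℝ)..h,
        Ginv (opSin (h - τ) G (m (t₀ + τ)
          (ψ t₀ + τ • φ t₀ + (τ ^ 2 / 2) • σ t₀))))
    (hΨ'1 : Ψ' 1 = -(G (opSin h G (ψ t₀))) + opCos h G (φ t₀) +
      ∫ τ in (0:ℝ)..h,
        opCos (h - τ) G (m (t₀ + τ)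
          (ψ t₀ + τ • φ t₀ + (τ ^ 2 / 2) • σ t₀)))
    (hΨstep : ∀ k : ℕ, 1 ≤ k → k ≤ K - 1 →
      Ψ (k + 1) = opCos h G (Ψ k) + Ginv (opSin h G (Ψ' k)) +
        ∫ τ in (0:ℝ)..h,
          Ginv (opSin (h - τ) G (m (t₀ + k * h + τ)
            (Ψ k + τ • Ψ' k + (τ ^ 2 / (2 * h)) • (Ψ' k - Ψ' (k - 1))))))
    (hΨ'step : ∀ k : ℕ, 1 ≤ k → k ≤ K - 1 →
      Ψ' (k + 1) = -(G (opSin h G (Ψ k))) + opCos h G (Ψ' k) +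
        ∫ τ in (0:ℝ)..h,
          opCos (h - τ) G (m (t₀ + k * h + τ)
            (Ψ k + τ • Ψ' k + (τ ^ 2 / (2 * h)) • (Ψ' k - Ψ' (k - 1))))) :
    -- conclusion
    (let ε : ℕ → E := fun k => ψ (t₀ + k * h) - Ψ k
     let ε' : ℕ → E := fun k => φ (t₀ + k * h) - Ψ' k
     let Etay : ℕ → ℝ → E := fun l τ =>
       ψ (t₀ + l * h + τ) - ψ (t₀ + l * h) - τ • φ (t₀ + l * h) -
         (τ ^ 2 / 2) • σ (t₀ + l * h)
     let Ebar : ℕ → E := fun l =>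
       if l = 0 then 0 else
         σ (t₀ + l * h) - h⁻¹ • (φ (t₀ + l * h) - φ (t₀ + ((l : ℝ) - 1) * h))
     let R : ℕ → E := fun k =>
       (2 : ℝ) • Ginv (opSin (h / 2) G
         (∑ l ∈ Finset.range (k - 1),
           ∫ τ in (0:ℝ)..h,
             opCos (((k : ℝ) - l) * h - h / 2 - τ) G
               (m (t₀ + l * h + τ) ((τ ^ 2 / 2) • Ebar l + Etay l τ)))) +
       ∫ τ in (0:ℝ)..h,
         Ginv (opSin (h - τ) G
           (m (t₀ + (k - 1 : ℕ) * h + τ)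
             ((τ ^ 2 / 2) • Ebar (k - 1) + Etay (k - 1) τ)))
     let R' : ℕ → E := fun k =>
       -((2 : ℝ) • opSin (h / 2) G
         (∑ l ∈ Finset.range (k - 1),
           ∫ τ in (0:ℝ)..h,
             opSin (((k : ℝ) - l) * h - h / 2 - τ) G
               (m (t₀ + l * h + τ) ((τ ^ 2 / 2) • Ebar l + Etay l τ)))) +
       ∫ τ in (0:ℝ)..h,
         opCos (h - τ) G
           (m (t₀ + (k - 1 : ℕ) * h + τ)
             ((τ ^ 2 / 2) • Ebar (k - 1) + Etay (k - 1) τ))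
     (ε 1 = ∫ τ in (0:ℝ)..h, Ginv (opSin (h - τ) G (m (t₀ + τ) (Etay 0 τ)))) ∧
     (ε' 1 = ∫ τ in (0:ℝ)..h, opCos (h - τ) G (m (t₀ + τ) (Etay 0 τ))) ∧
       ∀ k : ℕ, 2 ≤ k → k ≤ K →
         (ε k = ε (k - 1) +
           (2 : ℝ) • Ginv (opSin (h / 2) G
             (∑ l ∈ Finset.Icc 1 (k - 2),
               ∫ τ in (0:ℝ)..h,
                 opCos (((k : ℝ) - l) * h - h / 2 - τ) G
                   (m (t₀ + l * h + τ)
                     (ε l + (τ * (1 + τ / (2 * h))) • ε' l -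
                       (τ ^ 2 / (2 * h)) • ε' (l - 1))))) +
           (∫ τ in (0:ℝ)..h,
             Ginv (opSin (h - τ) G
               (m (t₀ + (k - 1 : ℕ) * h + τ)
                 (ε (k - 1) + (τ * (1 + τ / (2 * h))) • ε' (k - 1) -
                   (τ ^ 2 / (2 * h)) • ε' (k - 2))))) + R k) ∧
         (ε' k = ε' (k - 1) -
           (2 : ℝ) • opSin (h / 2) G
             (∑ l ∈ Finset.Icc 1 (k - 2),
               ∫ τ in (0:ℝ)..h,
                 opSin (((k : ℝ) - l) * h - h / 2 - τ) G
                   (m (t₀ + l * h + τ)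
                     (ε l + (τ * (1 + τ / (2 * h))) • ε' l -
                       (τ ^ 2 / (2 * h)) • ε' (l - 1)))) +
           (∫ τ in (0:ℝ)..h,
             opCos (h - τ) G
               (m (t₀ + (k - 1 : ℕ) * h + τ)
                 (ε (k - 1) + (τ * (1 + τ / (2 * h))) • ε' (k - 1) -
                   (τ ^ 2 / (2 * h)) • ε' (k - 2)))) + R' k)) := by
  intro ε ε' Etay Ebar R R'
  have hψ : Continuous ψ := continuous_iff_continuousAt.2 fun t => (hdψ t).continuousAt
  let P : ℕ → ℝ → E := fun l τ =>
    ε l + (τ * (1 + τ / (2 * h))) • ε' l - (τ ^ 2 / (2 * h)) • ε' (l - 1)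
  let D : ℕ → ℝ → E := fun l τ => (τ ^ 2 / 2) • Ebar l + Etay l τ
  have hε0 : ε 0 = 0 := by simp [ε, hΨ0]
  have hε'0 : ε' 0 = 0 := by simp [ε', hΨ'0]
  -- `0 - 1 = 0` in `ℕ`, so `P 0` involves only `ε 0` and `ε' 0`
  have hP0 : P 0 = 0 := funext fun τ => by simp [P, hε0, hε'0]
  have hexact : ∀ k ≤ K - 1, (ψ (t₀ + (k + 1 : ℕ) * h), φ (t₀ + (k + 1 : ℕ) * h)) =
      duhamelStep G Ginv h (ψ (t₀ + k * h)) (φ (t₀ + k * h))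
        (fun τ => m (t₀ + k * h + τ) (ψ (t₀ + k * h + τ))) := fun k hk => by
    push_cast
    exact Prod.ext (hstepψ k hk) (hstepφ k hk)
  have hstep₀ : (ε 1, ε' 1) = duhamelStep G Ginv h (ε 0) (ε' 0)
      fun τ => m (t₀ + (0 : ℕ) * h + τ) (P 0 τ + D 0 τ) := by
    refine prodMk_sub_eq_duhamelStep hm (by fun_prop) (by fun_prop) (hexact 0 (Nat.zero_le _))
      (F := fun τ => ψ t₀ + τ • φ t₀ + (τ ^ 2 / 2) • σ t₀) ?_ fun τ => ?_
    · simp only [hΨ0, hΨ'0, Nat.cast_zero, zero_mul, add_zero]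
      exact Prod.ext hΨ1 hΨ'1
    · simp [hP0, D, Ebar, Etay]
      abel
  have hstep : ∀ k < K, (ε (k + 1), ε' (k + 1)) = duhamelStep G Ginv h (ε k) (ε' k)
      fun τ => m (t₀ + k * h + τ) (P k τ + D k τ) := by
    rintro (_ | k) hk
    · exact hstep₀
    refine prodMk_sub_eq_duhamelStep hm (by fun_prop) (by fun_prop) (hexact (k + 1) (by omega))
      (Prod.ext (hΨstep (k + 1) (by omega) (by omega)) (hΨ'step (k + 1) (by omega) (by omega)))
      fun τ => ?_
    simp only [P, D, ε, ε', Ebar, Etay, Nat.add_sub_cancel, if_neg (Nat.succ_ne_zero k)]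
    push_cast
    rw [add_sub_cancel_right]
    module
  refine ⟨?_, ?_, fun k hk2 hkK => ?_⟩
  · simpa [duhamelStep, hε0, hε'0, hP0, D, Ebar] using congrArg Prod.fst hstep₀
  · simpa [duhamelStep, hε0, hε'0, hP0, D, Ebar] using congrArg Prod.snd hstep₀
  · exact duhamel_telescope_split hGl hGr hm (fun l => by fun_prop)
      (fun l => by simp only [D, Etay]; fun_prop) hP0 hε0 hε'0 hstep hk2 hkK

/-- **Theorem 3.2, telescoped global error recursion.**
With the errors `ε, ε'`, Taylor defects `Etay, Ebar` and the remainders `R, R'` as in the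
paper (the general formula for `R k`, `R' k` specializes at `k = 1` to `ℛ₁`, `ℛ'₁` since
`Ē₀ = 0` and the sum over `l ≤ k−2` is then empty), one has `ε₁ = ℛ₁`, `ε'₁ = ℛ'₁` and the
telescoped recursions for all `2 ≤ k ≤ K`. -/
theorem telescoped_global_error_recursion
    {E : Type*} [NormedAddCommGroup E] [NormedSpace ℂ E] [CompleteSpace E]
    (G Ginv : E →L[ℂ] E) (hGr : G * Ginv = 1) (hGl : Ginv * G = 1)
    (t₀ h : ℝ) (hh : 0 < h) (K : ℕ) (hK : 2 ≤ K)
    (m : ℝ → (E →L[ℂ] E)) (hm : Continuous m)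
    (ψ φ σ : ℝ → E)
    (hdψ : ∀ t : ℝ, HasDerivAt ψ (φ t) t) (hdφ : ∀ t : ℝ, HasDerivAt φ (σ t) t)
    -- one-step Duhamel relations for the exact solution
    (hstepψ : ∀ k : ℕ, k ≤ K - 1 →
      ψ (t₀ + ((k : ℝ) + 1) * h) =
        opCos h G (ψ (t₀ + k * h)) + Ginv (opSin h G (φ (t₀ + k * h))) +
          ∫ τ in (0:ℝ)..h,
            Ginv (opSin (h - τ) G (m (t₀ + k * h + τ) (ψ (t₀ + k * h + τ)))))
    (hstepφ : ∀ k : ℕ, k ≤ K - 1 →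
      φ (t₀ + ((k : ℝ) + 1) * h) =
        -(G (opSin h G (ψ (t₀ + k * h)))) + opCos h G (φ (t₀ + k * h)) +
          ∫ τ in (0:ℝ)..h,
            opCos (h - τ) G (m (t₀ + k * h + τ) (ψ (t₀ + k * h + τ))))
    -- the numerical scheme Ξ³ started from the exact data
    (Ψ Ψ' : ℕ → E) (hΨ0 : Ψ 0 = ψ t₀) (hΨ'0 : Ψ' 0 = φ t₀)
    (hΨ1 : Ψ 1 = opCos h G (ψ t₀) + Ginv (opSin h G (φ t₀)) +
      ∫ τ in (0:ℝ)..h,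
        Ginv (opSin (h - τ) G (m (t₀ + τ)
          (ψ t₀ + τ • φ t₀ + (τ ^ 2 / 2) • σ t₀))))
    (hΨ'1 : Ψ' 1 = -(G (opSin h G (ψ t₀))) + opCos h G (φ t₀) +
      ∫ τ in (0:ℝ)..h,
        opCos (h - τ) G (m (t₀ + τ)
          (ψ t₀ + τ • φ t₀ + (τ ^ 2 / 2) • σ t₀)))
    (hΨstep : ∀ k : ℕ, 1 ≤ k → k ≤ K - 1 →
      Ψ (k + 1) = opCos h G (Ψ k) + Ginv (opSin h G (Ψ' k)) +
        ∫ τ in (0:ℝ)..h,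
          Ginv (opSin (h - τ) G (m (t₀ + k * h + τ)
            (Ψ k + τ • Ψ' k + (τ ^ 2 / (2 * h)) • (Ψ' k - Ψ' (k - 1))))))
    (hΨ'step : ∀ k : ℕ, 1 ≤ k → k ≤ K - 1 →
      Ψ' (k + 1) = -(G (opSin h G (Ψ k))) + opCos h G (Ψ' k) +
        ∫ τ in (0:ℝ)..h,
          opCos (h - τ) G (m (t₀ + k * h + τ)
            (Ψ k + τ • Ψ' k + (τ ^ 2 / (2 * h)) • (Ψ' k - Ψ' (k - 1))))) :
    -- conclusion
    (let ε : ℕ → E := fun k => ψ (t₀ + k * h) - Ψ k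
     let ε' : ℕ → E := fun k => φ (t₀ + k * h) - Ψ' k
     let Etay : ℕ → ℝ → E := fun l τ =>
       ψ (t₀ + l * h + τ) - ψ (t₀ + l * h) - τ • φ (t₀ + l * h) -
         (τ ^ 2 / 2) • σ (t₀ + l * h)
     let Ebar : ℕ → E := fun l =>
       if l = 0 then 0 else
         σ (t₀ + l * h) - h⁻¹ • (φ (t₀ + l * h) - φ (t₀ + ((l : ℝ) - 1) * h))
     let R : ℕ → E := fun k =>
       (2 : ℝ) • Ginv (opSin (h / 2) G
         (∑ l ∈ Finset.range (k - 1),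
           ∫ τ in (0:ℝ)..h,
             opCos (((k : ℝ) - l) * h - h / 2 - τ) G
               (m (t₀ + l * h + τ) ((τ ^ 2 / 2) • Ebar l + Etay l τ)))) +
       ∫ τ in (0:ℝ)..h,
         Ginv (opSin (h - τ) G
           (m (t₀ + (k - 1 : ℕ) * h + τ)
             ((τ ^ 2 / 2) • Ebar (k - 1) + Etay (k - 1) τ)))
     let R' : ℕ → E := fun k =>
       -((2 : ℝ) • opSin (h / 2) G
         (∑ l ∈ Finset.range (k - 1),
           ∫ τ in (0:ℝ)..h,
             opSin (((k : ℝ) - l) * h - h / 2 - τ) G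
               (m (t₀ + l * h + τ) ((τ ^ 2 / 2) • Ebar l + Etay l τ)))) +
       ∫ τ in (0:ℝ)..h,
         opCos (h - τ) G
           (m (t₀ + (k - 1 : ℕ) * h + τ)
             ((τ ^ 2 / 2) • Ebar (k - 1) + Etay (k - 1) τ))
     (ε 1 = ∫ τ in (0:ℝ)..h, Ginv (opSin (h - τ) G (m (t₀ + τ) (Etay 0 τ)))) ∧
     (ε' 1 = ∫ τ in (0:ℝ)..h, opCos (h - τ) G (m (t₀ + τ) (Etay 0 τ))) ∧
       ∀ k : ℕ, 2 ≤ k → k ≤ K →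
         (ε k = ε (k - 1) +
           (2 : ℝ) • Ginv (opSin (h / 2) G
             (∑ l ∈ Finset.Icc 1 (k - 2),
               ∫ τ in (0:ℝ)..h,
                 opCos (((k : ℝ) - l) * h - h / 2 - τ) G
                   (m (t₀ + l * h + τ)
                     (ε l + (τ * (1 + τ / (2 * h))) • ε' l -
                       (τ ^ 2 / (2 * h)) • ε' (l - 1))))) +
           (∫ τ in (0:ℝ)..h,
             Ginv (opSin (h - τ) G
               (m (t₀ + (k - 1 : ℕ) * h + τ)
                 (ε (k - 1) + (τ * (1 + τ / (2 * h))) • ε' (k - 1) -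
                   (τ ^ 2 / (2 * h)) • ε' (k - 2))))) + R k) ∧
         (ε' k = ε' (k - 1) -
           (2 : ℝ) • opSin (h / 2) G
             (∑ l ∈ Finset.Icc 1 (k - 2),
               ∫ τ in (0:ℝ)..h,
                 opSin (((k : ℝ) - l) * h - h / 2 - τ) G
                   (m (t₀ + l * h + τ)
                     (ε l + (τ * (1 + τ / (2 * h))) • ε' l -
                       (τ ^ 2 / (2 * h)) • ε' (l - 1)))) +
           (∫ τ in (0:ℝ)..h,
             opCos (h - τ) G
               (m (t₀ + (k - 1 : ℕ) * h + τ)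
                 (ε (k - 1) + (τ * (1 + τ / (2 * h))) • ε' (k - 1) -
                   (τ ^ 2 / (2 * h)) • ε' (k - 2)))) + R' k)) :=
  telescoped_global_error_recursion_general G Ginv hGr hGl t₀ h K m hm ψ φ σ hdψ hstepψ hstepφ Ψ Ψ'
    hΨ0 hΨ'0 hΨ1 hΨ'1 hΨstep hΨ'step
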